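/- arXiv:1904.10519 — 7 statements merged into one kernel-verified Lean document; each statement's English description precedes it below -/
import Mathlib

section
/- Let $A_1 \subseteq A_2$ be integral domains with $A_1$ Noetherian. Then $A_1$ contains a nonzero ideal of $A_2$ if and only if $A_1$ and $A_2$ have the same field of fractions and $A_2$ is finitely generated as an $A_1$-module. -/
/-- For domains `A₁ ⊆ A₂` with `A₁` Noetherian, `A₁` contains a nonzero
ideal of `A₂` iff `A₁` and `A₂` have the same field of fractions (every element of `A₂`
is a ratio of elements of `A₁`) and `A₂` is finitely generated as an `A₁`-module. -/
theorem stmt_1 {A₂ : Type*} [CommRing A₂] [IsDomain A₂] (A₁ : Subring A₂)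
    (hNoeth : IsNoetherianRing A₁) :
    (∃ I : Ideal A₂, I ≠ ⊥ ∧ (I : Set A₂) ⊆ (A₁ : Set A₂)) ↔
      ((∀ x : A₂, ∃ a b : A₁, b ≠ 0 ∧ (b : A₂) * x = (a : A₂)) ∧
        ∃ (n : ℕ) (v : Fin n → A₂), ∀ x : A₂, ∃ cf : Fin n → A₁,
          x = ∑ i, (cf i : A₂) * v i) := by
  haveI := hNoeth
  constructor
  · rintro ⟨I, hI, hsub⟩
    obtain ⟨c, hcI, hc0⟩ := Submodule.ne_bot_iff I |>.mp hI
    have hmem : ∀ x : A₂, c * x ∈ A₁ := fun x => hsub (I.mul_mem_right x hcI)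
    constructor
    · intro x
      refine ⟨⟨c * x, hmem x⟩, ⟨c, hsub hcI⟩, ?_, rfl⟩
      intro h
      exact hc0 (congrArg Subtype.val h)
    · let f : A₂ →ₗ[A₁] A₁ :=
        { toFun := fun x => ⟨c * x, hmem x⟩
          map_add' := fun x y => by ext; simp [mul_add]
          map_smul' := fun a x => by
            ext
            simp [Subring.smul_def, mul_assoc, mul_left_comm] }
      have hf : Function.Injective f := by
        intro x y h
        have h2 : c * x = c * y := congrArg Subtype.val h
        exact mul_left_cancel₀ hc0 h2
      haveI : IsNoetherian A₁ A₂ := isNoetherian_of_injective f hf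
      obtain ⟨n, v, hv⟩ := Submodule.fg_iff_exists_fin_generating_family.mp
        (IsNoetherian.noetherian (⊤ : Submodule A₁ A₂))
      refine ⟨n, v, fun x => ?_⟩
      have hx : x ∈ Submodule.span A₁ (Set.range v) := hv ▸ Submodule.mem_top
      obtain ⟨cf, hcf⟩ := (Submodule.mem_span_range_iff_exists_fun A₁).mp hx
      refine ⟨cf, ?_⟩
      rw [← hcf]
      exact Finset.sum_congr rfl fun i _ => Subring.smul_def (cf i) (v i)
  · rintro ⟨hfrac, n, v, hv⟩
    choose a b hb hab using hfrac
    set c : A₁ := ∏ i, b (v i) with hc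
    have hcne : c ≠ 0 := Finset.prod_ne_zero_iff.mpr fun i _ => hb (v i)
    have hcne2 : (c : A₂) ≠ 0 := fun h => hcne (Subtype.ext h)
    have hcv : ∀ i, (c : A₂) * v i ∈ A₁ := by
      intro i
      have h1 : c = b (v i) * ∏ j ∈ Finset.univ.erase i, b (v j) :=
        (Finset.mul_prod_erase _ _ (Finset.mem_univ i)).symm
      have h2 : (c : A₂) * v i =
          (a (v i) : A₂) * ((∏ j ∈ Finset.univ.erase i, b (v j) : A₁) : A₂) := by
        rw [← hab (v i), h1]
        push_cast
        ring
      rw [h2]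
      exact A₁.mul_mem (SetLike.coe_mem _) (SetLike.coe_mem _)
    refine ⟨Ideal.span {(c : A₂)}, ?_, ?_⟩
    · simpa [Ideal.span_singleton_eq_bot] using hcne2
    · intro x hx
      obtain ⟨y, hy⟩ := Ideal.mem_span_singleton'.mp hx
      obtain ⟨cf, hcf⟩ := hv y
      have hx2 : x = ∑ i, (cf i : A₂) * ((c : A₂) * v i) := by
        rw [← hy, hcf, Finset.sum_mul]
        exact Finset.sum_congr rfl fun i _ => by ring
      rw [hx2]
      exact A₁.sum_mem fun i _ => A₁.mul_mem (SetLike.coe_mem _) (hcv i)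
end

section
/- For a commutative local pro-$p$ ring $A$ ($p$ odd) and a closed ideal $\mathfrak{a}$ of $A$, the principal congruence subgroup $\Gamma_A(\mathfrak{a}) = \ker(\mathrm{SL}_2(A) \to \mathrm{SL}_2(A/\mathfrak{a}))$ is a pro-$p$ group, and the first Pink-Lie algebra $L_1(\Gamma_A(\mathfrak{a}))$ — the closed additive subgroup of trace-zero matrices generated by $\Theta(x) = x - \tfrac{\operatorname{tr}(x)}{2}$ for $x \in \Gamma_A(\mathfrak{a})$ — equals $\mathfrak{sl}_2(\mathfrak{a})$, the set of trace-zero $2\times 2$ matrices with all entries in $\mathfrak{a}$. -/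
/-!
Modulo an open ideal `I` the ring `A ⧸ I` is finite of `p`-power order, so both `p` and the
image of `a` lie in its Jacobson radical `J`, which is nilpotent. If `N ≡ 0 mod J ^ j` with
`j ≥ 1`, the binomial theorem gives `(1 + N) ^ p ≡ 1 mod J ^ (j + 1)`, so every element of the
image of `Γ_A(a)` has `p`-power order.

`Θ` maps `Γ_A(a)` into `sl₂(a)`, which is closed. Conversely every element of `sl₂(a)` is a sum
of three matrices `N ∈ sl₂(a)` with `det N = 0`; for such `N` the matrix `1 + N` lies in
`Γ_A(a)` and `Θ(1 + N) = N`.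
-/

/-- A (commutative, local) topological ring is pro-`p` if it is profinite as a topological
space and all its finite discrete quotients have `p`-power order. -/
def IsProPRing (p : ℕ) (A : Type*) [CommRing A] [TopologicalSpace A] : Prop :=
  CompactSpace A ∧ TotallyDisconnectedSpace A ∧ T2Space A ∧
    ∀ I : Ideal A, IsOpen (I : Set A) → ∃ k : ℕ, Nat.card (A ⧸ I) = p ^ k

/-- Pink's map `Θ(x) = x - (tr x / 2) · 1`. -/
noncomputable def Theta {A : Type*} [CommRing A] [Invertible (2 : A)]
    (x : Matrix (Fin 2) (Fin 2) A) : Matrix (Fin 2) (Fin 2) A :=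
  x - (⅟(2 : A) * x.trace) • (1 : Matrix (Fin 2) (Fin 2) A)

/-- The principal congruence subgroup `Γ_A(a) = ker (SL₂(A) → SL₂(A/a))`. -/
def CongrSubgroup {A : Type*} [CommRing A] (a : Ideal A) :
    Subgroup (Matrix.SpecialLinearGroup (Fin 2) A) :=
  MonoidHom.ker (Matrix.SpecialLinearGroup.map (n := Fin 2) (Ideal.Quotient.mk a))

open IsLocalRing
open scoped MatrixGroups

namespace Ideal

variable {R : Type*} [CommRing R] {n : Type*} [Fintype n] [DecidableEq n]

variable (n) in
def sl (a : Ideal R) : AddSubgroup (Matrix n n R) :=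
  (Matrix.traceAddMonoidHom n R).ker ⊓ (a.matrix n).toAddSubgroup

theorem coe_sl (a : Ideal R) :
    (a.sl n : Set (Matrix n n R)) = {m | m.trace = 0 ∧ ∀ i j, m i j ∈ a} :=
  rfl

theorem isClosed_sl [TopologicalSpace R] [ContinuousAdd R] [T1Space R] {a : Ideal R}
    (ha : IsClosed (a : Set R)) : IsClosed (a.sl n : Set (Matrix n n R)) := by
  have hsl : (a.sl n : Set (Matrix n n R)) =
      (Matrix.trace ⁻¹' {0}) ∩ ⋂ i, ⋂ j, (fun m : Matrix n n R => m i j) ⁻¹' a := by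
    ext m
    simp [coe_sl]
  rw [hsl]
  exact (isClosed_singleton.preimage continuous_id.matrix_trace).inter <|
    isClosed_iInter fun i => isClosed_iInter fun j => ha.preimage (continuous_id.matrix_elem i j)

theorem mul_mem_matrix_mul {I J : Ideal R} {M N : Matrix n n R} (hM : M ∈ I.matrix n)
    (hN : N ∈ J.matrix n) : M * N ∈ (I * J).matrix n :=
  fun i j => Ideal.sum_mem _ fun k _ => mul_mem_mul (hM i k) (hN k j)

theorem pow_mem_matrix_pow {I : Ideal R} {N : Matrix n n R} (hN : N ∈ I.matrix n) :
    ∀ m : ℕ, N ^ m ∈ (I ^ m).matrix n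
  | 0 => by simp
  | m + 1 => by
    rw [pow_succ, pow_succ]
    exact mul_mem_matrix_mul (pow_mem_matrix_pow hN m) hN

theorem one_add_pow_sub_one_mem_matrix {p : ℕ} {b : Ideal R} (hp : (p : R) ∈ b) {j : ℕ}
    (hj : 1 ≤ j) {N : Matrix n n R} (hN : N ∈ (b ^ j).matrix n) :
    (1 + N) ^ p - 1 ∈ (b ^ (j + 1)).matrix n := by
  have hexpand : (1 + N) ^ p - 1 = ∑ m ∈ Finset.range p, p.choose (m + 1) • N ^ (m + 1) := by
    rw [add_comm, (Commute.one_right N).add_pow, Finset.sum_range_succ']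
    simp only [one_pow, mul_one, pow_zero, Nat.choose_zero_right, Nat.cast_one,
      add_sub_cancel_right, nsmul_eq_mul]
    exact Finset.sum_congr rfl fun m _ => (Nat.cast_comm _ _).symm
  rw [hexpand]
  refine Ideal.sum_mem _ fun m _ => ?_
  rcases m with _ | m
  · intro i k
    simpa [nsmul_eq_mul, pow_succ'] using mul_mem_mul hp (hN i k)
  · refine Submodule.smul_of_tower_mem _ _ (matrix_monotone n ?_ (pow_mem_matrix_pow hN _))
    rw [← pow_mul]
    exact pow_le_pow_right (by nlinarith)

theorem pow_pow_sub_one_mem_matrix {p : ℕ} {b : Ideal R} (hp : (p : R) ∈ b)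
    {y : Matrix n n R} (hy : y - 1 ∈ b.matrix n) :
    ∀ r : ℕ, y ^ p ^ r - 1 ∈ (b ^ (r + 1)).matrix n
  | 0 => by simpa using hy
  | r + 1 => by
    have h := one_add_pow_sub_one_mem_matrix hp (Nat.le_add_left 1 r)
      (pow_pow_sub_one_mem_matrix hp hy r)
    rwa [add_sub_cancel, ← pow_mul, ← pow_succ] at h

end Ideal

section CongrSubgroup

variable {A B : Type*} [CommRing A] [CommRing B]

theorem mem_congrSubgroup_iff {a : Ideal A} {x : SL(2, A)} :
    x ∈ CongrSubgroup a ↔ (x : Matrix (Fin 2) (Fin 2) A) - 1 ∈ a.matrix (Fin 2) := by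
  rw [CongrSubgroup, MonoidHom.mem_ker, Matrix.SpecialLinearGroup.ext_iff, Ideal.mem_matrix]
  refine forall₂_congr fun i j => ?_
  rw [Matrix.SpecialLinearGroup.map_apply_coe, RingHom.mapMatrix_apply, Matrix.map_apply,
    Matrix.SpecialLinearGroup.coe_one, Matrix.one_apply, Matrix.sub_apply, Matrix.one_apply,
    ← Ideal.Quotient.mk_eq_mk_iff_sub_mem, apply_ite (Ideal.Quotient.mk a), map_one, map_zero]

theorem congrSubgroup_mono {a b : Ideal A} (h : a ≤ b) : CongrSubgroup a ≤ CongrSubgroup b :=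
  fun _ hx => mem_congrSubgroup_iff.2 (Ideal.matrix_monotone _ h (mem_congrSubgroup_iff.1 hx))

theorem map_congrSubgroup_le (f : A →+* B) (a : Ideal A) :
    (CongrSubgroup a).map (Matrix.SpecialLinearGroup.map f) ≤ CongrSubgroup (a.map f) := by
  rintro _ ⟨x, hx, rfl⟩
  have hx' := mem_congrSubgroup_iff.1 hx
  refine mem_congrSubgroup_iff.2 fun i j => ?_
  simpa [Matrix.one_apply, apply_ite f] using Ideal.mem_map_of_mem f (hx' i j)

theorem isPGroup_congrSubgroup {p : ℕ} {b : Ideal A} (hb : IsNilpotent b) (hp : (p : A) ∈ b) :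
    IsPGroup p (CongrSubgroup b) := by
  obtain ⟨N, hN⟩ := hb
  intro g
  refine ⟨N, Subtype.ext <| Subtype.ext ?_⟩
  have h := Ideal.pow_pow_sub_one_mem_matrix hp (mem_congrSubgroup_iff.1 g.2) N
  rw [pow_succ, hN, Ideal.zero_eq_bot, Submodule.bot_mul, Ideal.matrix_bot, Ideal.mem_bot,
    sub_eq_zero] at h
  simpa using h

theorem isNilpotent_natCast_of_natCard_eq_pow {p k : ℕ} (h : Nat.card B = p ^ k) :
    IsNilpotent (p : B) :=
  ⟨k, by rw [← Nat.cast_pow, ← h, ← nsmul_one, card_nsmul_eq_zero']⟩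

theorem map_maximalIdeal_le_jacobson_bot [IsLocalRing A] (I : Ideal A) :
    (maximalIdeal A).map (Ideal.Quotient.mk I) ≤ (⊥ : Ideal (A ⧸ I)).jacobson := by
  rw [← Ideal.map_quotient_self I, ← Ideal.map_jacobson_of_surjective
    Ideal.Quotient.mk_surjective Ideal.mk_ker.le]
  exact Ideal.map_mono (maximalIdeal_le_jacobson I)

theorem isPGroup_map_congrSubgroup [IsLocalRing A] {p k : ℕ} (hp : p ≠ 0) {a : Ideal A}
    (ha : a ≤ maximalIdeal A) {I : Ideal A} (hI : Nat.card (A ⧸ I) = p ^ k) :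
    IsPGroup p ((CongrSubgroup a).map (Matrix.SpecialLinearGroup.map (Ideal.Quotient.mk I))) := by
  have : Finite (A ⧸ I) := Nat.finite_of_card_ne_zero (hI ▸ pow_ne_zero k hp)
  have hpJ : (p : A ⧸ I) ∈ (⊥ : Ideal (A ⧸ I)).jacobson :=
    Ideal.radical_le_jacobson (mem_nilradical.2 (isNilpotent_natCast_of_natCard_eq_pow hI))
  exact (isPGroup_congrSubgroup IsArtinianRing.isNilpotent_jacobson_bot hpJ).to_le <|
    (map_congrSubgroup_le _ a).trans <| congrSubgroup_mono <|
      (Ideal.map_mono ha).trans (map_maximalIdeal_le_jacobson_bot I)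

end CongrSubgroup

section Theta

variable {A : Type*} [CommRing A] [Invertible (2 : A)]

theorem trace_theta (x : Matrix (Fin 2) (Fin 2) A) : (Theta x).trace = 0 := by
  rw [Theta, Matrix.trace_sub, Matrix.trace_smul, Matrix.trace_one, Fintype.card_fin, smul_eq_mul,
    mul_comm, ← mul_assoc, Nat.cast_ofNat, mul_invOf_self', one_mul, sub_self]

theorem theta_add (x y : Matrix (Fin 2) (Fin 2) A) : Theta (x + y) = Theta x + Theta y := by
  simp only [Theta, Matrix.trace_add, mul_add, add_smul]
  abel

theorem theta_one : Theta (1 : Matrix (Fin 2) (Fin 2) A) = 0 := by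
  simp [Theta]

theorem theta_of_trace_eq_zero {x : Matrix (Fin 2) (Fin 2) A} (h : x.trace = 0) :
    Theta x = x := by
  simp [Theta, h]

theorem theta_eq_theta_sub_one (x : Matrix (Fin 2) (Fin 2) A) : Theta x = Theta (x - 1) := by
  conv_lhs => rw [← add_sub_cancel 1 x]
  rw [theta_add, theta_one, zero_add]

theorem theta_mem_matrix {a : Ideal A} {x : Matrix (Fin 2) (Fin 2) A}
    (hx : x ∈ a.matrix (Fin 2)) : Theta x ∈ a.matrix (Fin 2) := by
  have htr : x.trace ∈ a := Ideal.sum_mem _ fun i _ => hx i i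
  intro i j
  simp only [Theta, Matrix.sub_apply, Matrix.smul_apply, Matrix.one_apply, smul_eq_mul]
  exact a.sub_mem (hx i j) (a.mul_mem_right _ (a.mul_mem_left _ htr))

theorem theta_mem_sl {a : Ideal A} {x : SL(2, A)} (hx : x ∈ CongrSubgroup a) :
    Theta (x : Matrix (Fin 2) (Fin 2) A) ∈ a.sl (Fin 2) :=
  ⟨trace_theta _, theta_eq_theta_sub_one (x : Matrix (Fin 2) (Fin 2) A) ▸
    theta_mem_matrix (mem_congrSubgroup_iff.1 hx)⟩

end Theta

section Unipotent

variable {A : Type*} [CommRing A]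

def unipotent (N : Matrix (Fin 2) (Fin 2) A) (htr : N.trace = 0) (hdet : N.det = 0) : SL(2, A) :=
  ⟨1 + N, by
    rw [Matrix.trace_fin_two] at htr
    rw [Matrix.det_fin_two] at hdet ⊢
    simp only [Matrix.add_apply, Matrix.one_apply_eq, Matrix.one_apply_ne Fin.zero_ne_one,
      Matrix.one_apply_ne Fin.zero_ne_one.symm]
    linear_combination htr + hdet⟩

theorem unipotent_mem_congrSubgroup {a : Ideal A} {N : Matrix (Fin 2) (Fin 2) A}
    (htr : N.trace = 0) (hdet : N.det = 0) (hN : N ∈ a.matrix (Fin 2)) :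
    unipotent N htr hdet ∈ CongrSubgroup a :=
  mem_congrSubgroup_iff.2 ((add_sub_cancel_left 1 N).symm ▸ hN)

theorem theta_unipotent [Invertible (2 : A)] {N : Matrix (Fin 2) (Fin 2) A}
    (htr : N.trace = 0) (hdet : N.det = 0) :
    Theta (unipotent N htr hdet : Matrix (Fin 2) (Fin 2) A) = N := by
  change Theta (1 + N) = N
  rw [theta_add, theta_one, zero_add, theta_of_trace_eq_zero htr]

end Unipotent

section PinkLieAlgebra

variable {A : Type*} [CommRing A] [Invertible (2 : A)] [TopologicalSpace A] [IsTopologicalRing A]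

/-- Pink's `L₁(G)`. -/
def pinkLieAlgebra (G : Subgroup SL(2, A)) : AddSubgroup (Matrix (Fin 2) (Fin 2) A) :=
  (AddSubgroup.closure
    ((fun x : SL(2, A) => Theta (x : Matrix (Fin 2) (Fin 2) A)) '' G)).topologicalClosure

theorem theta_mem_pinkLieAlgebra {G : Subgroup SL(2, A)} {x : SL(2, A)} (hx : x ∈ G) :
    Theta (x : Matrix (Fin 2) (Fin 2) A) ∈ pinkLieAlgebra G :=
  AddSubgroup.le_topologicalClosure _ (AddSubgroup.subset_closure ⟨x, hx, rfl⟩)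

theorem pinkLieAlgebra_le {G : Subgroup SL(2, A)} {L : AddSubgroup (Matrix (Fin 2) (Fin 2) A)}
    (hL : IsClosed (L : Set (Matrix (Fin 2) (Fin 2) A)))
    (hG : ∀ x ∈ G, Theta (x : Matrix (Fin 2) (Fin 2) A) ∈ L) : pinkLieAlgebra G ≤ L :=
  AddSubgroup.topologicalClosure_minimal _
    ((AddSubgroup.closure_le L).2 <| by rintro _ ⟨x, hx, rfl⟩; exact hG x hx) hL

theorem mem_pinkLieAlgebra_of_det_eq_zero {a : Ideal A} {N : Matrix (Fin 2) (Fin 2) A}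
    (htr : N.trace = 0) (hdet : N.det = 0) (hN : N ∈ a.matrix (Fin 2)) :
    N ∈ pinkLieAlgebra (CongrSubgroup a) :=
  theta_unipotent htr hdet ▸ theta_mem_pinkLieAlgebra (unipotent_mem_congrSubgroup htr hdet hN)

theorem sl_le_pinkLieAlgebra (a : Ideal A) : a.sl (Fin 2) ≤ pinkLieAlgebra (CongrSubgroup a) := by
  rintro m ⟨htr, hm⟩
  change m.trace = 0 at htr
  change ∀ i j, m i j ∈ a at hm
  have hdecomp : m = !![m 0 0, m 0 0; -m 0 0, -m 0 0] + !![0, m 0 1 - m 0 0; 0, 0] +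
      !![0, 0; m 1 0 + m 0 0, 0] := by
    have hm11 : m 1 1 = -m 0 0 := eq_neg_of_add_eq_zero_right (m.trace_fin_two ▸ htr)
    ext i j
    fin_cases i <;> fin_cases j <;> simp [hm11]
  rw [hdecomp]
  refine add_mem (add_mem ?_ ?_) ?_ <;>
    refine mem_pinkLieAlgebra_of_det_eq_zero (by simp [Matrix.trace_fin_two])
      (by simp [Matrix.det_fin_two]) fun i j => ?_ <;>
    fin_cases i <;> fin_cases j <;>
    simp [hm 0 0, a.sub_mem (hm 0 1) (hm 0 0), a.add_mem (hm 1 0) (hm 0 0)]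

theorem pinkLieAlgebra_congrSubgroup [T1Space A] {a : Ideal A} (ha : IsClosed (a : Set A)) :
    pinkLieAlgebra (CongrSubgroup a) = a.sl (Fin 2) :=
  le_antisymm (pinkLieAlgebra_le (Ideal.isClosed_sl ha) fun _ => theta_mem_sl)
    (sl_le_pinkLieAlgebra a)

end PinkLieAlgebra

theorem stmt_4_general {p : ℕ} (hp : p.Prime)
    {A : Type*} [CommRing A] [TopologicalSpace A] [IsTopologicalRing A] [IsLocalRing A]
    [Invertible (2 : A)] (hA : IsProPRing p A)
    (a : Ideal A) (hclosed : IsClosed (a : Set A))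
    (ham : a ≤ IsLocalRing.maximalIdeal A) :
    (∀ I : Ideal A, IsOpen (I : Set A) →
      IsPGroup p
        ↥(Subgroup.map (Matrix.SpecialLinearGroup.map (n := Fin 2) (Ideal.Quotient.mk I))
          (CongrSubgroup a))) ∧
    ((AddSubgroup.topologicalClosure
        (AddSubgroup.closure
          ((fun x : Matrix.SpecialLinearGroup (Fin 2) A =>
              Theta (x : Matrix (Fin 2) (Fin 2) A)) ''
            (CongrSubgroup a : Set (Matrix.SpecialLinearGroup (Fin 2) A)))))
        : Set (Matrix (Fin 2) (Fin 2) A))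
      = {m : Matrix (Fin 2) (Fin 2) A | m.trace = 0 ∧ ∀ i j, m i j ∈ a} := by
  obtain ⟨-, -, _, hcard⟩ := hA
  refine ⟨fun I hI => ?_, ?_⟩
  · obtain ⟨k, hk⟩ := hcard I hI
    exact isPGroup_map_congrSubgroup hp.ne_zero ham hk
  · rw [← Ideal.coe_sl]
    exact congrArg SetLike.coe (pinkLieAlgebra_congrSubgroup hclosed)

/-- For a commutative local pro-`p` ring `A` (`p` odd) and a closed ideal
`a ⊆ m`, the principal congruence subgroup `Γ_A(a)` is a pro-`p` group (all its finite
continuous quotients, i.e. its images in `SL₂(A/I)` for open ideals `I`, are `p`-groups),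
and the first Pink-Lie algebra — the closed additive subgroup generated by `Θ(Γ_A(a))` —
equals `sl₂(a)`, the set of trace-zero matrices with all entries in `a`. -/
theorem stmt_4 {p : ℕ} (hp : p.Prime) (hodd : p ≠ 2)
    {A : Type*} [CommRing A] [TopologicalSpace A] [IsTopologicalRing A] [IsLocalRing A]
    [Invertible (2 : A)] (hA : IsProPRing p A)
    (a : Ideal A) (hclosed : IsClosed (a : Set A))
    (ham : a ≤ IsLocalRing.maximalIdeal A) :
    (∀ I : Ideal A, IsOpen (I : Set A) →
      IsPGroup p
        ↥(Subgroup.map (Matrix.SpecialLinearGroup.map (n := Fin 2) (Ideal.Quotient.mk I))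
          (CongrSubgroup a))) ∧
    ((AddSubgroup.topologicalClosure
        (AddSubgroup.closure
          ((fun x : Matrix.SpecialLinearGroup (Fin 2) A =>
              Theta (x : Matrix (Fin 2) (Fin 2) A)) ''
            (CongrSubgroup a : Set (Matrix.SpecialLinearGroup (Fin 2) A)))))
        : Set (Matrix (Fin 2) (Fin 2) A))
      = {m : Matrix (Fin 2) (Fin 2) A | m.trace = 0 ∧ ∀ i j, m i j ∈ a} :=
  stmt_4_general hp hA a hclosed ham
end

section
/- Let $G$ be a compact group and $K$ an algebraically closed topological field. Let $\rho \colon G \to \mathrm{GL}_2(K)$ be a nonscalar semisimple continuous representation. If $\rho \cong \eta \otimes \rho$ for some nontrivial character $\eta \colon G \to K^\times$, then $\eta^2 = 1$, $\ker\eta$ has index 2 in $G$, and the image $\rho(\ker \eta)$ is abelian. -/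
/-!
Comparing determinants in `η g • ρ g = P ρ(g) P⁻¹` gives `η g ^ 2 = 1`, so `η` takes values
in the group of square roots of unity, of order at most `2`, and its kernel has index `2`.
Since `η ≠ 1` the intertwiner `P` is not scalar, and `ρ(ker η)` lies in its centralizer. In
dimension `2` the centralizer of a nonscalar matrix is commutative: recording a matrix
`!![a, b; c, d]` modulo scalars as the vector `(a - d, b, c)`, two matrices commute exactly when
these vectors are parallel.
-/

/-- A `2`-dimensional representation (given by matrices) is semisimple if every invariant
subspace has an invariant complement. -/
def Semisimple2 {G K : Type*} [Group G] [Field K]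
    (ρ : G → Matrix (Fin 2) (Fin 2) K) : Prop :=
  ∀ W : Submodule K (Fin 2 → K), (∀ g : G, ∀ v ∈ W, (ρ g).mulVec v ∈ W) →
    ∃ W' : Submodule K (Fin 2 → K), (∀ g : G, ∀ v ∈ W', (ρ g).mulVec v ∈ W') ∧ IsCompl W W'

open Matrix

namespace Matrix

variable {R : Type*} [CommRing R]

def vecModScalar (A : Matrix (Fin 2) (Fin 2) R) : Fin 3 → R :=
  ![A 0 0 - A 1 1, A 0 1, A 1 0]

/-- The entries of `A * B - B * A` are, up to sign, the coordinates of this cross product. -/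
theorem commute_iff_cross_vecModScalar_eq_zero {A B : Matrix (Fin 2) (Fin 2) R} :
    Commute A B ↔ vecModScalar A ⨯₃ vecModScalar B = 0 := by
  rw [Commute, SemiconjBy, ← sub_eq_zero, cross_apply, vecModScalar, vecModScalar]
  simp only [← Matrix.ext_iff, funext_iff, Fin.forall_fin_succ, IsEmpty.forall_iff,
    Matrix.sub_apply, Matrix.zero_apply, Matrix.mul_apply, Fin.sum_univ_two, Fin.isValue,
    Fin.succ_zero_eq_one, Fin.succ_one_eq_two, cons_val_zero, cons_val_one, cons_val,
    Pi.zero_apply, and_true]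
  constructor
  · rintro ⟨⟨h00, h01⟩, h10, -⟩
    exact ⟨by linear_combination h00, by linear_combination h10, by linear_combination h01⟩
  · rintro ⟨h0, h1, h2⟩
    exact ⟨⟨by linear_combination h0, by linear_combination h2⟩, by linear_combination h1,
      by linear_combination -h0⟩

theorem eq_smul_one_of_vecModScalar_eq_zero {A : Matrix (Fin 2) (Fin 2) R}
    (h : vecModScalar A = 0) : A = A 0 0 • 1 := by
  simp only [vecModScalar, funext_iff, Fin.forall_fin_succ, IsEmpty.forall_iff, Fin.isValue,
    Fin.succ_zero_eq_one, Fin.succ_one_eq_two, cons_val_zero, cons_val_one, cons_val,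
    Pi.zero_apply, and_true] at h
  ext i j
  fin_cases i <;> fin_cases j <;> simp [h.2.1, h.2.2, sub_eq_zero.mp h.1]

end Matrix

theorem exists_eq_smul_of_cross_eq_zero {F : Type*} [Field F] {u w : Fin 3 → F} (hw : w ≠ 0)
    (h : u ⨯₃ w = 0) : ∃ a : F, a • w = u := by
  have : ¬ LinearIndependent F ![w, u] := fun hli =>
    crossProduct_ne_zero_iff_linearIndependent.mpr hli (by rw [← cross_anticomm, h, neg_zero])
  simpa [LinearIndependent.pair_iff' hw] using this

theorem cross_eq_zero_of_cross_eq_zero_of_ne_zero {F : Type*} [Field F] {u v w : Fin 3 → F} (hw : w ≠ 0)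
    (hu : u ⨯₃ w = 0) (hv : v ⨯₃ w = 0) : u ⨯₃ v = 0 := by
  obtain ⟨a, rfl⟩ := exists_eq_smul_of_cross_eq_zero hw hu
  obtain ⟨b, rfl⟩ := exists_eq_smul_of_cross_eq_zero hw hv
  simp [cross_self]

theorem Matrix.commute_of_commute_of_ne_smul_one {K : Type*} [Field K]
    {P A B : Matrix (Fin 2) (Fin 2) K} (hP : ∀ c : K, P ≠ c • 1)
    (hA : Commute A P) (hB : Commute B P) : Commute A B := by
  have hP0 : vecModScalar P ≠ 0 := fun h => hP _ (eq_smul_one_of_vecModScalar_eq_zero h)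
  rw [commute_iff_cross_vecModScalar_eq_zero] at hA hB ⊢
  exact cross_eq_zero_of_cross_eq_zero_of_ne_zero hP0 hA hB

section Conjugation

variable {n K : Type*} [Fintype n] [DecidableEq n] [Field K] {c : K} {A : Matrix n n K}
  {P : (Matrix n n K)ˣ}

theorem pow_card_eq_one_of_smul_eq_conj (hA : IsUnit A.det) (h : c • A = P * A * P⁻¹) :
    c ^ Fintype.card n = 1 := by
  have hdet := congrArg det h
  rw [det_smul, det_units_conj] at hdet
  exact (mul_eq_right₀ hA.ne_zero).mp hdet

theorem eq_one_of_smul_eq_conj_of_eq_smul_one (hA : A ≠ 0) {d : K}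
    (hP : (P : Matrix n n K) = d • 1) (h : c • A = P * A * P⁻¹) : c = 1 := by
  have hcomm : Commute (P : Matrix n n K) A := hP ▸ (Commute.one_left A).smul_left d
  rw [hcomm.eq, Units.mul_inv_cancel_right] at h
  exact smul_left_injective K hA (h.trans (one_smul K A).symm)

end Conjugation

theorem MonoidHom.index_ker_eq_two_of_sq_eq_one {G K : Type*} [Group G] [CommRing K] [IsDomain K]
    {η : G →* Kˣ} (hη : η ≠ 1) (hsq : ∀ g, η g ^ 2 = 1) : η.ker.index = 2 := by
  have hle : η.range ≤ rootsOfUnity 2 K := by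
    rintro _ ⟨g, rfl⟩
    exact (mem_rootsOfUnity 2 _).mpr (hsq g)
  have : Finite η.range := Finite.of_injective _ (Subgroup.inclusion_injective hle)
  rw [Subgroup.index_ker]
  refine le_antisymm ((Subgroup.card_le_of_le hle).trans (card_rootsOfUnity K 2)) ?_
  exact (Subgroup.one_lt_card_iff_ne_bot _).mpr (mt range_eq_bot_iff.mp hη)

theorem stmt_9_general {G K : Type*} [Group G] [Field K]
    (ρ : G →* (Matrix (Fin 2) (Fin 2) K)ˣ)
    (η : G →* Kˣ) (hη : η ≠ 1)
    (P : (Matrix (Fin 2) (Fin 2) K)ˣ)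
    (hiso : ∀ g : G, (η g : K) • (ρ g : Matrix (Fin 2) (Fin 2) K) =
      (P : Matrix (Fin 2) (Fin 2) K) * (ρ g : Matrix (Fin 2) (Fin 2) K) *
        ((P⁻¹ : (Matrix (Fin 2) (Fin 2) K)ˣ) : Matrix (Fin 2) (Fin 2) K)) :
    (∀ g : G, η g * η g = 1) ∧ η.ker.index = 2 ∧
      ∀ g ∈ η.ker, ∀ h ∈ η.ker, ρ g * ρ h = ρ h * ρ g := by
  have hsq : ∀ g, η g ^ 2 = 1 := fun g => Units.ext <| by
    simpa using pow_card_eq_one_of_smul_eq_conj (isUnits_det_units (ρ g)) (hiso g)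
  have hP : ∀ c : K, (P : Matrix (Fin 2) (Fin 2) K) ≠ c • 1 := fun c hc =>
    hη <| MonoidHom.ext fun g => Units.ext <|
      eq_one_of_smul_eq_conj_of_eq_smul_one (ρ g).ne_zero hc (hiso g)
  have hker : ∀ g ∈ η.ker, Commute (ρ g : Matrix (Fin 2) (Fin 2) K) P := fun g hg =>
    (Units.eq_mul_inv_iff_mul_eq _).mp (by simpa [MonoidHom.mem_ker.mp hg] using hiso g)
  refine ⟨fun g => (sq _).symm.trans (hsq g), η.index_ker_eq_two_of_sq_eq_one hη hsq,
    fun g hg h hh => Units.ext ?_⟩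
  exact (commute_of_commute_of_ne_smul_one hP (hker g hg) (hker h hh)).eq

/-- Let `G` be a compact group, `K` an algebraically closed topological
field of characteristic not `2`, and `ρ : G → GL₂(K)` a nonscalar semisimple continuous
representation.  If `ρ ≅ η ⊗ ρ` for a nontrivial character `η`, then `η² = 1`, `ker η`
has index `2` and `ρ(ker η)` is abelian. -/
theorem stmt_9 {G K : Type*} [Group G] [TopologicalSpace G] [IsTopologicalGroup G]
    [CompactSpace G] [Field K] [IsAlgClosed K] [TopologicalSpace K] [IsTopologicalRing K]
    (hchar : (2 : K) ≠ 0)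
    (ρ : G →* (Matrix (Fin 2) (Fin 2) K)ˣ)
    (hcont : Continuous fun g => (ρ g : Matrix (Fin 2) (Fin 2) K))
    (hss : Semisimple2 (fun g => (ρ g : Matrix (Fin 2) (Fin 2) K)))
    (hns : ¬ ∀ g : G, ∃ c : K, (ρ g : Matrix (Fin 2) (Fin 2) K) = c • (1 : Matrix (Fin 2) (Fin 2) K))
    (η : G →* Kˣ) (hηcont : Continuous fun g => (η g : K)) (hη : η ≠ 1)
    (P : (Matrix (Fin 2) (Fin 2) K)ˣ)
    (hiso : ∀ g : G, (η g : K) • (ρ g : Matrix (Fin 2) (Fin 2) K) =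
      (P : Matrix (Fin 2) (Fin 2) K) * (ρ g : Matrix (Fin 2) (Fin 2) K) *
        ((P⁻¹ : (Matrix (Fin 2) (Fin 2) K)ˣ) : Matrix (Fin 2) (Fin 2) K)) :
    (∀ g : G, η g * η g = 1) ∧ η.ker.index = 2 ∧
      ∀ g ∈ η.ker, ∀ h ∈ η.ker, ρ g * ρ h = ρ h * ρ g :=
  stmt_9_general ρ η hη P hiso
end

section
/- Let $G$ be a compact group, $K$ an algebraically closed topological field, and $\rho_1, \rho_2 \colon G \to \mathrm{GL}_2(K)$ semisimple continuous representations such that both are reducible (direct sums of two characters). If $\mathrm{ad}^0\rho_1 \cong \mathrm{ad}^0\rho_2$, then there exists a character $\eta \colon G \to K^\times$ with $\rho_1 \cong \eta \otimes \rho_2$. -/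
/-!
Conjugation by `diag(a, b)` scales the entries of a `2×2` matrix by `1, a/b, b/a, 1`, so the
characters occurring in `ad⁰(λ ⊕ μ)` are exactly `λμ⁻¹`, `μλ⁻¹` and `1`. An isomorphism
`ad⁰ρ₁ ≅ ad⁰ρ₂` preserves the characters that occur, so `λ₂μ₂⁻¹` is `λ₁μ₁⁻¹`, `μ₁λ₁⁻¹` or `1`; in the
last case `ρ₂` is scalar, and running the argument backwards with `λ₁μ₁⁻¹` shows `λ₁μ₁⁻¹ = 1` too.
If `λ₂μ₂⁻¹ = λ₁μ₁⁻¹` then `η = λ₁λ₂⁻¹` twists `ρ₂` into `ρ₁`; if `λ₂μ₂⁻¹ = μ₁λ₁⁻¹` then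
`η = λ₁μ₂⁻¹` does, after swapping the two basis vectors.
-/

/-- An isomorphism `ad⁰ρ₁ ≅ ad⁰ρ₂` between the adjoint representations (conjugation on
trace-zero `2×2` matrices) of two matrix representations: a linear map of the matrix
space restricting to a linear bijection of the trace-zero matrices and intertwining the
two conjugation actions. -/
def Ad0Iso {G K : Type*} [Group G] [Field K]
    (ρ₁ ρ₂ : G → Matrix (Fin 2) (Fin 2) K) : Prop :=
  ∃ L : Matrix (Fin 2) (Fin 2) K →ₗ[K] Matrix (Fin 2) (Fin 2) K,
    (∀ X : Matrix (Fin 2) (Fin 2) K, X.trace = 0 → (L X).trace = 0) ∧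
    (∀ X : Matrix (Fin 2) (Fin 2) K, X.trace = 0 → L X = 0 → X = 0) ∧
    (∀ Y : Matrix (Fin 2) (Fin 2) K, Y.trace = 0 → ∃ X, X.trace = 0 ∧ L X = Y) ∧
    (∀ (g : G) (X : Matrix (Fin 2) (Fin 2) K), X.trace = 0 →
      L (ρ₂ g * X * (ρ₂ g)⁻¹) = ρ₁ g * L X * (ρ₁ g)⁻¹)

open Matrix

section Conjugation

variable {n K : Type*} [Fintype n] [DecidableEq n] [Field K]

theorem Matrix.conj_diagonal_apply {d : n → K} (hd : ∀ k, d k ≠ 0) (X : Matrix n n K) (i j : n) :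
    (diagonal d * X * (diagonal d)⁻¹) i j = d i * X i j / d j := by
  have hinv : (diagonal d)⁻¹ = diagonal d⁻¹ :=
    inv_eq_left_inv (by rw [diagonal_mul_diagonal, ← diagonal_one]; simp [hd])
  rw [hinv, mul_diagonal, diagonal_mul, Pi.inv_apply, div_eq_mul_inv]

theorem Matrix.conj_diagonal_single {d : n → K} (hd : ∀ k, d k ≠ 0) (i j : n) (c : K) :
    diagonal d * single i j c * (diagonal d)⁻¹ = (d i / d j) • single i j c := by
  ext k l
  rw [conj_diagonal_apply hd, smul_apply, smul_eq_mul]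
  by_cases h : i = k ∧ j = l
  · obtain ⟨rfl, rfl⟩ := h
    rw [single_apply_same]
    ring
  · rw [single_apply_of_ne i j c k l h, mul_zero, zero_div, mul_zero]

theorem Matrix.eq_div_of_conj_diagonal_eq_smul {d : n → K} (hd : ∀ k, d k ≠ 0)
    {X : Matrix n n K} {c : K} (hX : diagonal d * X * (diagonal d)⁻¹ = c • X) {i j : n}
    (hij : X i j ≠ 0) : c = d i / d j := by
  have h := congrFun (congrFun hX i) j
  rw [conj_diagonal_apply hd, smul_apply, smul_eq_mul] at h
  apply mul_right_cancel₀ hij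
  rw [← h]
  ring

theorem Matrix.swap_mul_diagonal_mul_swap (a b : K) :
    !![0, 1; 1, 0] * diagonal ![a, b] * !![0, 1; 1, 0] = diagonal ![b, a] := by
  ext i j
  fin_cases i <;> fin_cases j <;> simp [mul_apply, vecMul, dotProduct, Fin.sum_univ_two]

theorem Matrix.trace_conj_eq_zero {X : Matrix n n K} (hX : X.trace = 0) (A : Matrix n n K) :
    (A * X * A⁻¹).trace = 0 := by
  rw [trace_mul_cycle]
  by_cases hA : IsUnit A.det
  · rwa [nonsing_inv_mul A hA, one_mul]
  · rw [nonsing_inv_apply_not_isUnit A hA, zero_mul, zero_mul, trace_zero]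

end Conjugation

section Eigencharacter

variable {G K : Type*} [Group G] [Field K]

def Ad0HasEigencharacter (ρ : G → Matrix (Fin 2) (Fin 2) K) (c : G → K) : Prop :=
  ∃ X : Matrix (Fin 2) (Fin 2) K, X.trace = 0 ∧ X ≠ 0 ∧ ∀ g, ρ g * X * (ρ g)⁻¹ = c g • X

theorem Ad0Iso.ad0HasEigencharacter_iff {ρ₁ ρ₂ : G → Matrix (Fin 2) (Fin 2) K}
    (h : Ad0Iso ρ₁ ρ₂) (c : G → K) :
    Ad0HasEigencharacter ρ₁ c ↔ Ad0HasEigencharacter ρ₂ c := by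
  obtain ⟨L, htr, hinj, hsurj, hcomm⟩ := h
  constructor
  · rintro ⟨Y, hYtr, hY0, hY⟩
    obtain ⟨X, hXtr, rfl⟩ := hsurj Y hYtr
    refine ⟨X, hXtr, fun hX0 => hY0 (by rw [hX0, map_zero]), fun g => ?_⟩
    have hdiff_tr : (ρ₂ g * X * (ρ₂ g)⁻¹ - c g • X).trace = 0 := by
      rw [trace_sub, trace_smul, trace_conj_eq_zero hXtr, hXtr, smul_zero, sub_zero]
    have hdiff : L (ρ₂ g * X * (ρ₂ g)⁻¹ - c g • X) = 0 := by
      rw [map_sub, map_smul, hcomm g X hXtr, hY g, sub_self]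
    exact sub_eq_zero.mp (hinj _ hdiff_tr hdiff)
  · rintro ⟨X, hXtr, hX0, hX⟩
    refine ⟨L X, htr X hXtr, fun hLX => hX0 (hinj X hXtr hLX), fun g => ?_⟩
    rw [← hcomm g X hXtr, hX g, map_smul]

variable (l m : G →* Kˣ)

theorem ad0HasEigencharacter_diagonal :
    Ad0HasEigencharacter (fun g => diagonal ![(l g : K), (m g : K)])
      (fun g => (l g : K) / m g) := by
  refine ⟨single 0 1 1, trace_single_eq_of_ne _ _ _ zero_ne_one, ?_, fun g => ?_⟩
  · exact fun h => one_ne_zero (congrFun (congrFun h 0) 1)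
  · exact conj_diagonal_single (by simp [Fin.forall_fin_two]) 0 1 1

theorem Ad0HasEigencharacter.diagonal_cases {c : G → K}
    (hc : Ad0HasEigencharacter (fun g => diagonal ![(l g : K), (m g : K)]) c) :
    (∀ g, c g = l g / m g) ∨ (∀ g, c g = m g / l g) ∨ (∀ g, c g = 1) := by
  obtain ⟨X, -, hX0, hX⟩ := hc
  obtain ⟨i, j, hij⟩ : ∃ i j, X i j ≠ 0 := by
    by_contra! h
    exact hX0 (ext h)
  have hratio g := eq_div_of_conj_diagonal_eq_smul (by simp [Fin.forall_fin_two]) (hX g) hij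
  fin_cases i <;> fin_cases j
  · exact Or.inr (Or.inr fun g => by simpa using hratio g)
  · exact Or.inl fun g => by simpa using hratio g
  · exact Or.inr (Or.inl fun g => by simpa using hratio g)
  · exact Or.inr (Or.inr fun g => by simpa using hratio g)

end Eigencharacter

section Twist

variable {G K : Type*} [Group G] [Field K] (l₁ m₁ l₂ m₂ : G →* Kˣ)

theorem exists_twist_of_div_eq (h : ∀ g, (l₂ g : K) / m₂ g = l₁ g / m₁ g) :
    ∃ η : G →* Kˣ, ∀ g : G, (η g : K) • diagonal ![(l₂ g : K), (m₂ g : K)] =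
      diagonal ![(l₁ g : K), (m₁ g : K)] := by
  refine ⟨l₁ * l₂⁻¹, fun g => ?_⟩
  have hm : (l₁ g : K) / l₂ g * m₂ g = m₁ g := by
    have hg := h g
    field_simp at hg ⊢
    linear_combination -hg
  rw [← diagonal_smul]
  congr 1
  ext i
  fin_cases i <;> simp [← hm, div_eq_mul_inv]

theorem exists_twist_of_div_eq_swap (h : ∀ g, (l₂ g : K) / m₂ g = m₁ g / l₁ g) :
    ∃ η : G →* Kˣ, ∀ g : G, (η g : K) • diagonal ![(l₂ g : K), (m₂ g : K)] =
      !![0, 1; 1, 0] * diagonal ![(l₁ g : K), (m₁ g : K)] * !![0, 1; 1, 0]⁻¹ := by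
  have hswap_inv : (!![0, 1; 1, 0] : Matrix (Fin 2) (Fin 2) K)⁻¹ = !![0, 1; 1, 0] :=
    inv_eq_left_inv (by simp [one_fin_two])
  refine ⟨l₁ * m₂⁻¹, fun g => ?_⟩
  have hm : (l₁ g : K) / m₂ g * l₂ g = m₁ g := by
    have hg := h g
    field_simp at hg ⊢
    linear_combination hg
  rw [hswap_inv, swap_mul_diagonal_mul_swap, ← diagonal_smul]
  congr 1
  ext i
  fin_cases i <;> simp [← hm, div_eq_mul_inv]

theorem ad0Iso_diagonal_div_cases
    (hiso : Ad0Iso (fun g => diagonal ![(l₁ g : K), (m₁ g : K)])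
      (fun g => diagonal ![(l₂ g : K), (m₂ g : K)])) :
    (∀ g, (l₂ g : K) / m₂ g = l₁ g / m₁ g) ∨ (∀ g, (l₂ g : K) / m₂ g = m₁ g / l₁ g) := by
  rcases ((hiso.ad0HasEigencharacter_iff _).2 (ad0HasEigencharacter_diagonal l₂ m₂)).diagonal_cases
    with h₂ | h₂ | h₂
  · exact Or.inl h₂
  · exact Or.inr h₂
  -- `ρ₂` is scalar here, so `l₁ / m₁`, which occurs in `ad⁰ρ₂`, is trivial.
  left
  intro g
  rcases ((hiso.ad0HasEigencharacter_iff _).1 (ad0HasEigencharacter_diagonal l₁ m₁)).diagonal_cases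
    with h₁ | h₁ | h₁
  · exact (h₁ g).symm
  · rw [h₁ g, h₂ g, ← inv_div, h₂ g, inv_one]
  · rw [h₁ g, h₂ g]

end Twist

theorem stmt_12_general {G K : Type*} [Group G] [Field K]
    (l₁ m₁ l₂ m₂ : G →* Kˣ)
    (hiso : Ad0Iso (fun g => Matrix.diagonal ![(l₁ g : K), (m₁ g : K)])
      (fun g => Matrix.diagonal ![(l₂ g : K), (m₂ g : K)])) :
    ∃ η : G →* Kˣ, ∃ P : Matrix (Fin 2) (Fin 2) K, IsUnit P.det ∧
      ∀ g : G, (η g : K) • Matrix.diagonal ![(l₂ g : K), (m₂ g : K)] =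
        P * Matrix.diagonal ![(l₁ g : K), (m₁ g : K)] * P⁻¹ := by
  rcases ad0Iso_diagonal_div_cases l₁ m₁ l₂ m₂ hiso with h | h
  · obtain ⟨η, hη⟩ := exists_twist_of_div_eq l₁ m₁ l₂ m₂ h
    exact ⟨η, 1, by simp, fun g => by rw [inv_one, one_mul, mul_one, hη g]⟩
  · obtain ⟨η, hη⟩ := exists_twist_of_div_eq_swap l₁ m₁ l₂ m₂ h
    exact ⟨η, _, by simp [det_fin_two], hη⟩

/-- Let `G` be a compact group, `K` an algebraically closed topological
field, and `ρᵢ = λᵢ ⊕ μᵢ` (for `i = 1, 2`) semisimple continuous reducible `2`-dimensional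
representations (sums of two continuous characters).  If `ad⁰ρ₁ ≅ ad⁰ρ₂` then there is a
character `η : G → Kˣ` with `ρ₁ ≅ η ⊗ ρ₂`. -/
theorem stmt_12 {G K : Type*} [Group G] [TopologicalSpace G] [IsTopologicalGroup G]
    [CompactSpace G] [Field K] [IsAlgClosed K] [TopologicalSpace K] [IsTopologicalRing K]
    (l₁ m₁ l₂ m₂ : G →* Kˣ)
    (hl₁ : Continuous fun g => (l₁ g : K)) (hm₁ : Continuous fun g => (m₁ g : K))
    (hl₂ : Continuous fun g => (l₂ g : K)) (hm₂ : Continuous fun g => (m₂ g : K))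
    (hiso : Ad0Iso (fun g => Matrix.diagonal ![(l₁ g : K), (m₁ g : K)])
      (fun g => Matrix.diagonal ![(l₂ g : K), (m₂ g : K)])) :
    ∃ η : G →* Kˣ, ∃ P : Matrix (Fin 2) (Fin 2) K, IsUnit P.det ∧
      ∀ g : G, (η g : K) • Matrix.diagonal ![(l₂ g : K), (m₂ g : K)] =
        P * Matrix.diagonal ![(l₁ g : K), (m₁ g : K)] * P⁻¹ :=
  stmt_12_general l₁ m₁ l₂ m₂ hiso
end

section
/- Let $A$ be a commutative Noetherian ring with $2 \in A^\times$, equipped with a ring involution $*$. Then the fixed subring $A^+ = \{a \in A : a^* = a\}$ is a Noetherian ring. -/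
/-- The subring of elements fixed by a ring automorphism `σ` of `A`. -/
def fixedSubring {A : Type*} [CommRing A] (σ : A ≃+* A) : Subring A where
  carrier := {a | σ a = a}
  zero_mem' := by simp
  one_mem' := by simp
  add_mem' := by
    intro a b ha hb
    simp only [Set.mem_setOf_eq] at *
    rw [map_add, ha, hb]
  neg_mem' := by
    intro a ha
    simp only [Set.mem_setOf_eq] at *
    rw [map_neg, ha]
  mul_mem' := by
    intro a b ha hb
    simp only [Set.mem_setOf_eq] at *
    rw [map_mul, ha, hb]

/-
Averaging over `{1, σ}` is an `A⁺`-linear retraction of `A` onto `A⁺`, so `A⁺` is a direct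
summand of `A` as an `A⁺`-module. Hence `IA ∩ A⁺ = I` for every ideal `I` of `A⁺`: extension
of ideals embeds the ideal lattice of `A⁺` into that of `A`, and the ascending chain condition
descends.
-/

theorem isNoetherianRing_of_comap_map_eq_self {R S : Type*} [Semiring R] [Semiring S]
    [IsNoetherianRing S] (f : R →+* S) (hf : ∀ I : Ideal R, (I.map f).comap f = I) :
    IsNoetherianRing R := by
  have hmap : StrictMono (Ideal.map f : Ideal R → Ideal S) :=
    Monotone.strictMono_of_injective (fun _ _ => Ideal.map_mono)
      (Function.LeftInverse.injective hf)
  rw [isNoetherianRing_iff, isNoetherian_iff']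
  exact hmap.wellFoundedGT

theorem Ideal.comap_map_algebraMap_eq_self_of_retraction {R S : Type*} [CommSemiring R]
    [CommSemiring S] [Algebra R S] (ρ : S →ₗ[R] R) (hρ : ∀ r, ρ (algebraMap R S r) = r)
    (I : Ideal R) : (I.map (algebraMap R S)).comap (algebraMap R S) = I := by
  refine le_antisymm (fun r hr => ?_) Ideal.le_comap_map
  have hmem : algebraMap R S r ∈ I • (⊤ : Submodule R S) := by
    rw [Ideal.smul_top_eq_map]; exact hr
  rw [← hρ r]
  refine Submodule.smul_induction_on hmem (fun i hi s _ => ?_) (fun x y hx hy => ?_)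
  · rw [map_smul, smul_eq_mul]; exact I.mul_mem_right _ hi
  · rw [map_add]; exact I.add_mem hx hy

theorem map_units_inv_of_map_eq {F M : Type*} [Monoid M] [FunLike F M M] [MonoidHomClass F M M]
    (f : F) {u : Mˣ} (hu : f u = u) : f ↑u⁻¹ = ↑u⁻¹ := by
  refine Units.eq_inv_of_mul_eq_one_left ?_
  rw [← hu, ← map_mul, Units.mul_inv, map_one]

section Involution

variable {A : Type*} [CommRing A] (σ : A ≃+* A) (hσ : ∀ a, σ (σ a) = a) (h2 : IsUnit (2 : A))

noncomputable def fixedSubringAverage : A →ₗ[fixedSubring σ] fixedSubring σ where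
  toFun a := ⟨↑h2.unit⁻¹ * (a + σ a), by
    change σ _ = _
    rw [map_mul, map_units_inv_of_map_eq σ (by simp [map_ofNat]), map_add, hσ, add_comm (σ a)]⟩
  map_add' a b := by
    ext
    simp only [map_add, Subring.coe_add]
    ring
  map_smul' r a := by
    ext
    simp only [Subring.smul_def, smul_eq_mul, map_mul, RingHom.id_apply, Subring.coe_mul]
    rw [show σ r = r from r.2]
    ring

theorem fixedSubringAverage_algebraMap (r : fixedSubring σ) :
    fixedSubringAverage σ hσ h2 (algebraMap (fixedSubring σ) A r) = r := by
  ext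
  change ↑h2.unit⁻¹ * ((r : A) + σ r) = r
  rw [show σ r = r from r.2, ← two_mul, ← mul_assoc, IsUnit.val_inv_mul, one_mul]

end Involution

/-- Let `A` be a commutative Noetherian ring with `2 ∈ Aˣ`, equipped with a
ring involution `σ`.  Then the fixed subring `A⁺ = {a | σ a = a}` is Noetherian. -/
theorem stmt_15 {A : Type*} [CommRing A] [IsNoetherianRing A] (h2 : IsUnit (2 : A))
    (σ : A ≃+* A) (hσ : ∀ a : A, σ (σ a) = a) :
    IsNoetherianRing (fixedSubring σ) :=
  isNoetherianRing_of_comap_map_eq_self (algebraMap (fixedSubring σ) A)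
    (Ideal.comap_map_algebraMap_eq_self_of_retraction _ (fixedSubringAverage_algebraMap σ hσ h2))
end

section
/- Let $A$ be a commutative Noetherian ring with $2 \in A^\times$, equipped with a ring involution $*$. Then $A$ is a Noetherian (equivalently, finitely generated) module over the fixed subring $A^+ = \{a \in A : a^* = a\}$. -/
section Aux

variable {A : Type*} [CommRing A] (σ : A ≃+* A)

lemma mem_fixedSubring_iff (a : A) : a ∈ fixedSubring σ ↔ σ a = a := Iff.rfl

/-- If `inv2` is a two-sided inverse of `2` fixed by `σ`, then for any `x` in the `A`-span
of a set `T` of anti-fixed elements, and any `c : A`, the "minus part" of `c * x`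
lies in the `fixedSubring σ`-span of `T`. -/
lemma minusPart_mem_span (hσ : ∀ a : A, σ (σ a) = a)
    {inv2 : A} (hinv2 : inv2 * 2 = 1) (hσinv2 : σ inv2 = inv2)
    {T : Set A} (hT : ∀ t ∈ T, σ t = -t) {x : A} (hx : x ∈ Submodule.span A T) :
    ∀ c : A, inv2 * (c * x - σ (c * x)) ∈ Submodule.span (fixedSubring σ) T := by
  induction hx using Submodule.span_induction with
  | mem t ht =>
    intro c
    have h1 : σ (c * t) = σ c * (-t) := by rw [map_mul, hT t ht]
    have h2 : inv2 * (c * t - σ (c * t)) = (inv2 * (c + σ c)) * t := by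
      rw [h1]; ring
    rw [h2]
    have hr : (inv2 * (c + σ c)) ∈ fixedSubring σ := by
      rw [mem_fixedSubring_iff, map_mul, hσinv2, map_add, hσ c]
      ring
    exact Submodule.smul_mem _ (⟨_, hr⟩ : fixedSubring σ) (Submodule.subset_span ht)
  | zero => intro c; simp
  | add x y hx hy ihx ihy =>
    intro c
    have : inv2 * (c * (x + y) - σ (c * (x + y))) =
        inv2 * (c * x - σ (c * x)) + inv2 * (c * y - σ (c * y)) := by
      rw [mul_add, map_add]; ring
    rw [this]
    exact Submodule.add_mem _ (ihx c) (ihy c)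
  | smul d x hx ihx =>
    intro c
    have : c * (d • x) = (c * d) * x := by rw [smul_eq_mul]; ring
    rw [this]
    exact ihx (c * d)

end Aux

/-- Let `A` be a commutative Noetherian ring with `2 ∈ Aˣ`, equipped with a
ring involution `σ`.  Then `A` is a Noetherian (equivalently, finitely generated) module
over the fixed subring `A⁺ = {a | σ a = a}`. -/
theorem stmt_17 {A : Type*} [CommRing A] [IsNoetherianRing A] (h2 : IsUnit (2 : A))
    (σ : A ≃+* A) (hσ : ∀ a : A, σ (σ a) = a) :
    IsNoetherian (fixedSubring σ) A ∧ Module.Finite (fixedSubring σ) A := by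
  classical
  obtain ⟨u, hu⟩ := h2
  set R := fixedSubring σ with hR
  -- an inverse of 2
  set inv2 : A := ((u⁻¹ : Aˣ) : A) with hinv2def
  have hinv2 : inv2 * 2 = 1 := by rw [hinv2def, ← hu]; exact u.inv_mul
  have hinv2' : (2 : A) * inv2 = 1 := by rw [mul_comm]; exact hinv2
  have hσ2 : σ (2 : A) = 2 := by
    have := map_ofNat σ 2; simpa using map_ofNat σ 2
  have hσinv2 : σ inv2 = inv2 := by
    have h := congrArg σ hinv2
    rw [map_mul, hσ2, map_one] at h
    calc σ inv2 = σ inv2 * (2 * inv2) := by rw [hinv2', mul_one]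
      _ = (σ inv2 * 2) * inv2 := by ring
      _ = inv2 := by rw [h, one_mul]
  -- the set of anti-fixed elements
  set S : Set A := {a | σ a = -a} with hS
  -- key decomposition facts
  have hplus : ∀ a : A, inv2 * (a + σ a) ∈ R := by
    intro a
    rw [hR, mem_fixedSubring_iff, map_mul, hσinv2, map_add, hσ a]
    ring_nf
  have hminus : ∀ a : A, inv2 * (a - σ a) ∈ S := by
    intro a
    rw [hS, Set.mem_setOf_eq, map_mul, hσinv2, map_sub, hσ a]
    ring
  have hdecomp : ∀ a : A, a = inv2 * (a + σ a) + inv2 * (a - σ a) := by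
    intro a
    have : inv2 * (a + σ a) + inv2 * (a - σ a) = (inv2 * 2) * a := by ring
    rw [this, hinv2, one_mul]
  -- find a finite subset T of S whose A-span contains S
  have hfg : (Submodule.span A S).FG := IsNoetherian.noetherian _
  obtain ⟨G, hG⟩ := hfg
  have hGmem : ∀ g ∈ G, (g : A) ∈ Submodule.span A S := by
    intro g hg
    rw [← hG]
    exact Submodule.subset_span hg
  choose Tf hTf1 hTf2 using fun g : {x // x ∈ G} =>
    Submodule.mem_span_finite_of_mem_span (hGmem g g.2)
  set T : Finset A := G.attach.biUnion (fun g => Tf g) with hT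
  have hTS : (T : Set A) ⊆ S := by
    intro x hx
    simp only [hT, Finset.coe_biUnion, Set.mem_iUnion] at hx
    obtain ⟨g, hg, hxg⟩ := hx
    exact hTf1 _ hxg
  have hTanti : ∀ t ∈ (T : Set A), σ t = -t := fun t ht => hTS ht
  have hspanT : Submodule.span A S ≤ Submodule.span A (T : Set A) := by
    rw [← hG]
    rw [Submodule.span_le]
    intro g hg
    have : (g : A) ∈ Submodule.span A ((Tf ⟨g, hg⟩ : Finset A) : Set A) := hTf2 ⟨g, hg⟩
    refine Submodule.span_mono ?_ this
    intro x hx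
    simp only [hT, Finset.coe_biUnion, Set.mem_iUnion]
    exact ⟨⟨g, hg⟩, Finset.mem_attach _ _, hx⟩
  -- every element of A lies in the R-span of {1} ∪ T
  have hmain : ∀ a : A, a ∈ Submodule.span R (insert (1 : A) (T : Set A)) := by
    intro a
    rw [hdecomp a]
    refine Submodule.add_mem _ ?_ ?_
    · -- plus part is an R-multiple of 1
      have : inv2 * (a + σ a) = (⟨inv2 * (a + σ a), hplus a⟩ : R) • (1 : A) := by
        rw [Algebra.smul_def, mul_one]
        rfl
      rw [this]
      exact Submodule.smul_mem _ _ (Submodule.subset_span (Set.mem_insert _ _))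
    · -- minus part
      set m : A := inv2 * (a - σ a) with hm
      have hmS : m ∈ S := hminus a
      have hmT : m ∈ Submodule.span A (T : Set A) :=
        hspanT (Submodule.subset_span hmS)
      have hmm : σ m = -m := hmS
      have key := minusPart_mem_span σ hσ hinv2 hσinv2 hTanti hmT 1
      have : inv2 * (1 * m - σ (1 * m)) = m := by
        rw [one_mul, hmm]
        have : inv2 * (m - -m) = (inv2 * 2) * m := by ring
        rw [this, hinv2, one_mul]
      rw [this] at key
      exact Submodule.span_mono (Set.subset_insert _ _) key
  have hfin : Module.Finite R A := by
    refine ⟨⟨insert (1 : A) T, ?_⟩⟩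
    rw [eq_top_iff]
    intro a _
    have := hmain a
    simpa using this
  -- Noetherianity of R via an order embedding of ideals
  have hRnoeth : IsNoetherianRing R := by
    -- to each ideal of R associate the A-span of its image in A
    have hle : ∀ I J : Ideal R,
        Submodule.span A (Subtype.val '' (I : Set R)) ≤ Submodule.span A (Subtype.val '' (J : Set R)) →
        I ≤ J := by
      intro I J hIJ i hi
      have hiA : (i : A) ∈ Submodule.span A (Subtype.val '' (J : Set R)) :=
        hIJ (Submodule.subset_span ⟨i, hi, rfl⟩)
      -- show plus part of any element of the span lies in J
      have key : ∀ x ∈ Submodule.span A (Subtype.val '' (J : Set R)),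
          ∀ c : A, ∃ j ∈ J, (j : A) = inv2 * (c * x + σ (c * x)) := by
        intro x hx
        induction hx using Submodule.span_induction with
        | mem t ht =>
          obtain ⟨j, hj, rfl⟩ := ht
          intro c
          have hjfix : σ (j : A) = (j : A) := j.2
          refine ⟨(⟨inv2 * (c + σ c), hplus c⟩ : R) * j, Ideal.mul_mem_left _ _ hj, ?_⟩
          push_cast
          rw [map_mul, hjfix]
          ring
        | zero => intro c; exact ⟨0, J.zero_mem, by simp⟩
        | add x y hx hy ihx ihy =>
          intro c
          obtain ⟨j1, hj1, hj1e⟩ := ihx c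
          obtain ⟨j2, hj2, hj2e⟩ := ihy c
          refine ⟨j1 + j2, J.add_mem hj1 hj2, ?_⟩
          push_cast
          rw [hj1e, hj2e]
          have e : c * (x + y) = c * x + c * y := mul_add c x y
          rw [e, map_add]
          ring
        | smul d x hx ihx =>
          intro c
          obtain ⟨j, hj, hje⟩ := ihx (c * d)
          refine ⟨j, hj, ?_⟩
          rw [hje, smul_eq_mul]
          ring_nf
      obtain ⟨j, hj, hje⟩ := key (i : A) hiA 1
      have hij : (j : A) = (i : A) := by
        have hif : σ (i : A) = (i : A) := i.2
        rw [hje, one_mul, hif]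
        have : inv2 * ((i : A) + (i : A)) = (inv2 * 2) * (i : A) := by ring
        rw [this, hinv2, one_mul]
      have : j = i := Subtype.ext hij
      rwa [← this]
    have hmono : ∀ I J : Ideal R, I ≤ J →
        Submodule.span A (Subtype.val '' (I : Set R)) ≤ Submodule.span A (Subtype.val '' (J : Set R)) := by
      intro I J h
      exact Submodule.span_mono (Set.image_mono h)
    -- build the order embedding
    let f : Ideal R ↪o Submodule A A :=
      { toFun := fun I => Submodule.span A (Subtype.val '' (I : Set R))
        inj' := by
          intro I J h
          exact le_antisymm (hle I J h.le) (hle J I h.ge)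
        map_rel_iff' := by
          intro I J
          exact ⟨hle I J, hmono I J⟩ }
    have : WellFoundedGT (Submodule A A) := (isNoetherian_iff').mp inferInstance
    have : WellFoundedGT (Ideal R) := f.wellFoundedGT
    exact isNoetherian_mk this
  exact ⟨@isNoetherian_of_isNoetherianRing_of_finite R A _ _ _ hRnoeth hfin, hfin⟩
end

section
/- Let $A$ be a commutative local Noetherian ring with $2 \in A^\times$, equipped with a ring involution $*$, and write $A = A^+ \oplus A^-$ where $A^\pm$ are the $\pm 1$-eigenspaces of $*$. Let $\mathfrak{p}$ be a prime ideal of $A$ that is not graded, i.e., $\mathfrak{p} \neq (\mathfrak{p} \cap A^+) \oplus (\mathfrak{p} \cap A^-)$, and let $f \colon A \to A' := A/\mathfrak{p}$ be the quotient. Then the domain $A'$ has the same field of fractions as the image $f(A^+)$: every element of $A'$ is a quotient of elements of $f(A^+)$. -/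
/-- Let `A` be a commutative local Noetherian ring with `2 ∈ Aˣ`, equipped
with a ring involution `σ`, and let `𝔭` be a prime ideal of `A` that is not graded for
the eigenspace decomposition `A = A⁺ ⊕ A⁻` (i.e. not every element of `𝔭` is a sum of an
element of `𝔭 ∩ A⁺` and an element of `𝔭 ∩ A⁻`).  Then the domain `A' = A/𝔭` has the same
field of fractions as the image of `A⁺`: every element of `A'` is a quotient of elements
of `f(A⁺)`, where `f : A → A/𝔭` is the quotient map. -/
theorem stmt_19 {A : Type*} [CommRing A] [IsLocalRing A] [IsNoetherianRing A]
    (h2 : IsUnit (2 : A)) (σ : A ≃+* A) (hσ : ∀ a : A, σ (σ a) = a)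
    (𝔭 : Ideal A) (hprime : 𝔭.IsPrime)
    (hng : ¬ ∀ a ∈ 𝔭, ∃ x ∈ 𝔭, ∃ y ∈ 𝔭, σ x = x ∧ σ y = -y ∧ a = x + y) :
    ∀ z : A ⧸ 𝔭, ∃ x y : A, σ x = x ∧ σ y = y ∧
      Ideal.Quotient.mk 𝔭 y ≠ 0 ∧ z * Ideal.Quotient.mk 𝔭 y = Ideal.Quotient.mk 𝔭 x := by
  push_neg at hng
  obtain ⟨a, ha, hbad⟩ := hng
  obtain ⟨h, hh⟩ := h2.exists_right_inv
  have hσ2 : σ (2 : A) = 2 := by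
    have : ((2 : A)) = (1 : A) + 1 := by norm_num
    rw [this, map_add, map_one]
  have hσh : σ h = h := by
    have h1 : (2 : A) * σ h = 1 := by rw [← hσ2, ← map_mul, hh, map_one]
    calc σ h = (2 * h) * σ h := by rw [hh, one_mul]
    _ = h * (2 * σ h) := by ring
    _ = h := by rw [h1, mul_one]
  set e := h * (a + σ a) with he
  set o := h * (a - σ a) with ho
  have hσe : σ e = e := by
    simp only [he, map_mul, map_add, hσ, hσh]; ring
  have hσo : σ o = -o := by
    simp only [ho, map_mul, map_sub, hσ, hσh]; ring
  have heo : e + o = a := by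
    have h' : e + o = (2 * h) * a := by rw [he, ho]; ring
    rw [h', hh, one_mul]
  have hem : e ∉ 𝔭 := by
    intro hem
    have hom : o ∈ 𝔭 := by
      have : o = a - e := by rw [← heo]; ring
      rw [this]; exact Ideal.sub_mem _ ha hem
    exact hbad e hem o hom hσe hσo heo.symm
  intro z
  obtain ⟨t, rfl⟩ := Ideal.Quotient.mk_surjective z
  refine ⟨h * (t - σ t) * o - h * (t + σ t) * e, -e, ?_, by rw [map_neg, hσe], ?_, ?_⟩
  · simp only [map_sub, map_mul, map_add, map_neg, hσ, hσh, hσe, hσo]; ring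
  · rw [Ne, Ideal.Quotient.eq_zero_iff_mem]
    simpa using hem
  · rw [← map_mul, Ideal.Quotient.mk_eq_mk_iff_sub_mem]
    have key : t * -e - (h * (t - σ t) * o - h * (t + σ t) * e)
        = -(h * (t - σ t) * a) + (2 * h - 1) * (t * e) := by
      rw [← heo]; ring
    rw [key, hh]
    simpa using 𝔭.mul_mem_left (-(h * (t - σ t))) ha
end
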